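/- Let I = 3, J = 2, G_1 = {1,2}, G_2 = {1,3}, and h_1(x) = (x+2)⁺, h_2(x) = (x+1)⁺, h_3(x) = 5x⁺. Then the ⪕-greatest element F(t) = (F_1(t), F_2(t), F_3(t)) of A_t is given by: F_1(t) = t − 2, F_2(t) = −1, F_3(t) = 0 for 0 ≤ t ≤ 1; F_1(t) = F_2(t) = (t−3)/2, F_3(t) = (t−1)/10 for 1 ≤ t ≤ 7/2; and F_1(t) = F_3(t) = t/6 − 1/3, F_2(t) = 5t/6 − 8/3 for t ≥ 7/2. In particular, F is continuous and nondecreasing on [0,∞). -/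

import Mathlib

/-- The set of indices at which `a` attains its minimum. -/
noncomputable def argminSet {n : ℕ} (a : Fin n → ℝ) : Finset (Fin n) :=
  Finset.univ.filter (fun i => ∀ j, a i ≤ a j)

/-- The minimum entry of `a`. -/
noncomputable def minval {n : ℕ} (a : Fin n → ℝ) : ℝ := ⨅ i, a i

/-- The restriction of `a` to the indices in `S`, reindexed by `Fin S.card`
in increasing order. -/
noncomputable def restrictVec {n : ℕ} (S : Finset (Fin n)) (a : Fin n → ℝ) :
    Fin S.card → ℝ :=
  fun i => a (S.orderIsoOfFin rfl i).1

/-- The "min-sensitive" partial order `⪕` on `ℝⁿ` (Definition 1 of the paper):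
for `n = 1` it is the usual order; for `n ≥ 2`, `a ⪕ b` iff (i) `a = b`, or
(ii) `min a < min b`, or (iii) `min a = min b` and `Argmin b ⊊ Argmin a`, or
(iv) `min a = min b`, `Argmin a = Argmin b ⊊ {1,...,n}` and the restrictions
of `a` and `b` to the complement of the common argmin set are related. -/
noncomputable def msLE : (n : ℕ) → (Fin n → ℝ) → (Fin n → ℝ) → Prop
  | 0, _, _ => True
  | 1, a, b => a 0 ≤ b 0
  | n + 2, a, b =>
    a = b ∨
    minval a < minval b ∨
    (minval a = minval b ∧ argminSet b ⊂ argminSet a) ∨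
    (minval a = minval b ∧ argminSet a = argminSet b ∧ argminSet a ⊂ Finset.univ ∧
      msLE ((argminSet a)ᶜ).card (restrictVec (argminSet a)ᶜ a) (restrictVec (argminSet a)ᶜ b))
termination_by n => n
decreasing_by
  have hne : (argminSet a).Nonempty := by
    obtain ⟨i, -, hi⟩ := Finset.exists_min_image Finset.univ a ⟨0, Finset.mem_univ 0⟩
    refine ⟨i, ?_⟩
    unfold argminSet
    exact Finset.mem_filter.mpr ⟨Finset.mem_univ i, fun j => hi j (Finset.mem_univ j)⟩
  have h1 : 0 < (argminSet a).card := Finset.card_pos.mpr hne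
  have h2 : ((argminSet a)ᶜ).card = Fintype.card (Fin (n + 2)) - (argminSet a).card :=
    Finset.card_compl _
  simp only [Fintype.card_fin] at h2
  omega

/-- `x*_i`: the supremum of the zero set of a function. -/
noncomputable def xstar (f : ℝ → ℝ) : ℝ := sSup {x | f x = 0}

/-- The admissible set `A_t`. -/
def admissible (I J : ℕ) (h : Fin I → ℝ → ℝ) (G : Fin J → Finset (Fin I)) (t : ℝ) :
    Set (Fin I → ℝ) :=
  {a | (∀ i, a i ≤ t) ∧ ∀ j, (∑ i ∈ G j, h i (a i)) ≤ t}

/-- `F` is the `⪕`-greatest element of `A_t`. -/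
def IsGreatestMS (I J : ℕ) (h : Fin I → ℝ → ℝ) (G : Fin J → Finset (Fin I)) (t : ℝ)
    (F : Fin I → ℝ) : Prop :=
  F ∈ admissible I J h G t ∧ ∀ a ∈ admissible I J h G t, msLE I a F

/-- The resource sets of Example 2 of the paper: `G_1 = {1,2}`, `G_2 = {1,3}`
(indices shifted down by one). -/
def G17 : Fin 2 → Finset (Fin 3)
  | 0 => {0, 1}
  | 1 => {0, 2}

/-- The functions `h₁(x) = (x+2)⁺`, `h₂(x) = (x+1)⁺`, `h₃(x) = 5x⁺` of Example 2. -/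
noncomputable def h17 : Fin 3 → ℝ → ℝ
  | 0 => fun x => max (x + 2) 0
  | 1 => fun x => max (x + 1) 0
  | 2 => fun x => 5 * max x 0

/-!
Two properties of `⪕` carry the argument: it never lowers the minimum entry, and `c ⪕ b`
together with `b ≤ c` coordinatewise forces `b = c` (induction on the dimension through the
four clauses of the definition). Hence an admissible `c` is the `⪕`-greatest element of `A_t`
as soon as every admissible `b` whose entries are all at least `min c` lies below `c`.

In the example `A_t` is a polyhedron, and that domination is linear arithmetic in each regime:
the minimum is attained at `{1}` and pinned by `h₁(a₁) ≤ t` for `t ≤ 1`, at `{1, 2}` and pinned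
by the `G₁`-constraint for `1 ≤ t ≤ 7/2`, and at `{1, 3}` and pinned by the `G₂`-constraint for
`t ≥ 7/2`. The three formulas are the restrictions of one expression in `min` and `max`, which
gives continuity and monotonicity.
-/

section MinSensitiveOrder

variable {n : ℕ}

lemma minval_le (a : Fin n → ℝ) (i : Fin n) : minval a ≤ a i :=
  have : Nonempty (Fin n) := ⟨i⟩
  ciInf_le (Finite.bddBelow_range a) i

lemma le_minval [NeZero n] {a : Fin n → ℝ} {m : ℝ} (h : ∀ i, m ≤ a i) : m ≤ minval a :=
  le_ciInf h

lemma minval_mono [NeZero n] {a b : Fin n → ℝ} (h : a ≤ b) : minval a ≤ minval b :=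
  le_minval fun i => (minval_le a i).trans (h i)

lemma mem_argminSet_iff {a : Fin n → ℝ} {i : Fin n} : i ∈ argminSet a ↔ a i = minval a := by
  have : Nonempty (Fin n) := ⟨i⟩
  simp only [argminSet, Finset.mem_filter, Finset.mem_univ, true_and]
  exact ⟨fun h => le_antisymm (le_ciInf h) (minval_le a i), fun h j => h ▸ minval_le a j⟩

lemma argminSet_nonempty [NeZero n] (a : Fin n → ℝ) : (argminSet a).Nonempty := by
  obtain ⟨i, -, hi⟩ := Finset.univ.exists_min_image a Finset.univ_nonempty
  exact ⟨i, by simpa [argminSet] using hi⟩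

lemma eq_of_mem_of_restrictVec_eq {S : Finset (Fin n)} {a b : Fin n → ℝ}
    (h : restrictVec S a = restrictVec S b) {i : Fin n} (hi : i ∈ S) : a i = b i := by
  simpa [restrictVec] using congrFun h ((S.orderIsoOfFin rfl).symm ⟨i, hi⟩)

theorem minval_le_minval_of_msLE {a b : Fin n → ℝ} (h : msLE n a b) : minval a ≤ minval b := by
  match n, a, b, h with
  | 0, a, b, _ => simp [minval]
  | 1, a, b, h => simpa [minval, msLE] using h
  | k + 2, a, b, h =>
    rw [msLE] at h
    rcases h with rfl | h | ⟨h, -⟩ | ⟨h, -⟩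
    exacts [le_rfl, h.le, h.le, h.le]

theorem eq_of_msLE_of_le {b c : Fin n → ℝ} (hle : b ≤ c) (h : msLE n c b) : b = c := by
  induction n using Nat.strong_induction_on with
  | _ n ih =>
  match n, b, c, hle, h with
  | 0, b, c, _, _ => exact Subsingleton.elim b c
  | 1, b, c, hle, h =>
    funext i
    fin_cases i
    exact le_antisymm (hle 0) (by simpa [msLE] using h)
  | k + 2, b, c, hle, h =>
    rw [msLE] at h
    rcases h with rfl | hlt | ⟨hmin, hsub⟩ | ⟨hmin, hargmin, -, hrest⟩
    · rfl
    · exact absurd (minval_mono hle) hlt.not_ge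
    · obtain ⟨j, hjc, hjb⟩ := Finset.exists_of_ssubset hsub
      rw [mem_argminSet_iff] at hjc hjb
      exact absurd (le_antisymm (hmin ▸ hjc ▸ hle j) (minval_le b j)) hjb
    · have hcard : ((argminSet c)ᶜ).card < k + 2 := by
        simpa using (argminSet c).card_compl_lt_iff_nonempty.mpr (argminSet_nonempty c)
      have hrest_eq := ih _ hcard (fun i => hle _) hrest
      funext i
      by_cases hi : i ∈ argminSet c
      · have hib : i ∈ argminSet b := hargmin ▸ hi
        rw [mem_argminSet_iff.mp hib, mem_argminSet_iff.mp hi, hmin]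
      · exact eq_of_mem_of_restrictVec_eq hrest_eq (Finset.mem_compl.mpr hi)

theorem eq_of_msLE_of_forall_le [NeZero n] {b c : Fin n → ℝ} {m : ℝ} (hc : ∀ i, m ≤ c i)
    (hbc : (∀ i, m ≤ b i) → b ≤ c) (h : msLE n c b) : b = c :=
  eq_of_msLE_of_le (hbc fun i => (le_minval hc).trans <|
    (minval_le_minval_of_msLE h).trans (minval_le b i)) h

end MinSensitiveOrder

theorem IsGreatestMS.eq_of_forall_le {I J : ℕ} [NeZero I] {h : Fin I → ℝ → ℝ}
    {G : Fin J → Finset (Fin I)} {t : ℝ} {F c : Fin I → ℝ} {m : ℝ}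
    (hF : IsGreatestMS I J h G t F) (hc : c ∈ admissible I J h G t) (hmc : ∀ i, m ≤ c i)
    (hdom : ∀ b ∈ admissible I J h G t, (∀ i, m ≤ b i) → b ≤ c) : F = c :=
  eq_of_msLE_of_forall_le hmc (hdom F hF.1) (hF.2 c hc)

lemma mem_admissible_example_iff {t : ℝ} {b : Fin 3 → ℝ} :
    b ∈ admissible 3 2 h17 G17 t ↔
      b 0 ≤ t ∧ b 1 ≤ t ∧ b 2 ≤ t ∧ b 0 + b 1 + 3 ≤ t ∧ b 0 + 5 * b 2 + 2 ≤ t ∧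
        b 0 + 2 ≤ t ∧ b 1 + 1 ≤ t ∧ 5 * b 2 ≤ t ∧ 0 ≤ t := by
  have hG₀ : ∑ i ∈ G17 0, h17 i (b i) = max (b 0 + 2) 0 + max (b 1 + 1) 0 :=
    Finset.sum_pair (by decide)
  have hG₁ : ∑ i ∈ G17 1, h17 i (b i) = max (b 0 + 2) 0 + 5 * max (b 2) 0 :=
    Finset.sum_pair (by decide)
  simp only [admissible, Set.mem_ofPred_eq, hG₀, hG₁, Fin.forall_fin_succ,
    Fin.succ_zero_eq_one, Fin.succ_one_eq_two, IsEmpty.forall_iff, and_true]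
  grind

lemma eq_of_isGreatestMS_example {t m x y z : ℝ} {F : Fin 3 → ℝ}
    (hF : IsGreatestMS 3 2 h17 G17 t F) (hc : ![x, y, z] ∈ admissible 3 2 h17 G17 t)
    (hm : m ≤ x ∧ m ≤ y ∧ m ≤ z)
    (hdom : ∀ b ∈ admissible 3 2 h17 G17 t, m ≤ b 0 → m ≤ b 1 → m ≤ b 2 →
      b 0 ≤ x ∧ b 1 ≤ y ∧ b 2 ≤ z) :
    F = ![x, y, z] := by
  refine hF.eq_of_forall_le (m := m) hc (fun i => ?_) fun b hb hmb i => ?_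
  · fin_cases i <;> simp [hm]
  · fin_cases i <;> simp [hdom b hb (hmb 0) (hmb 1) (hmb 2)]

lemma eq_of_isGreatestMS_example_of_le_one {t : ℝ} {F : Fin 3 → ℝ} (h0 : 0 ≤ t) (h1 : t ≤ 1)
    (hF : IsGreatestMS 3 2 h17 G17 t F) : F = ![t - 2, -1, 0] := by
  refine eq_of_isGreatestMS_example (m := t - 2) hF ?_ (by grind) fun b hb hb0 hb1 hb2 => ?_
  · exact mem_admissible_example_iff.mpr (by simp only [Matrix.cons_val]; grind)
  · grind [mem_admissible_example_iff]

lemma eq_of_isGreatestMS_example_of_le_seven_halves {t : ℝ} {F : Fin 3 → ℝ} (h1 : 1 ≤ t)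
    (h2 : t ≤ 7 / 2) (hF : IsGreatestMS 3 2 h17 G17 t F) :
    F = ![(t - 3) / 2, (t - 3) / 2, (t - 1) / 10] := by
  refine eq_of_isGreatestMS_example (m := (t - 3) / 2) hF ?_ (by grind)
    fun b hb hb0 hb1 hb2 => ?_
  · exact mem_admissible_example_iff.mpr (by simp only [Matrix.cons_val]; grind)
  · grind [mem_admissible_example_iff]

lemma eq_of_isGreatestMS_example_of_seven_halves_le {t : ℝ} {F : Fin 3 → ℝ} (h : 7 / 2 ≤ t)
    (hF : IsGreatestMS 3 2 h17 G17 t F) :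
    F = ![t / 6 - 1 / 3, 5 * t / 6 - 8 / 3, t / 6 - 1 / 3] := by
  refine eq_of_isGreatestMS_example (m := t / 6 - 1 / 3) hF ?_ (by grind)
    fun b hb hb0 hb1 hb2 => ?_
  · exact mem_admissible_example_iff.mpr (by simp only [Matrix.cons_val]; grind)
  · grind [mem_admissible_example_iff]

noncomputable def exampleF (t : ℝ) : Fin 3 → ℝ :=
  ![min (t - 2) (min ((t - 3) / 2) (t / 6 - 1 / 3)),
    max (-1) (max ((t - 3) / 2) (5 * t / 6 - 8 / 3)),
    max 0 (max ((t - 1) / 10) (t / 6 - 1 / 3))]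

lemma continuous_exampleF : Continuous exampleF :=
  continuous_pi fun i => by fin_cases i <;> simp only [exampleF] <;> fun_prop

lemma monotone_exampleF : Monotone exampleF := by
  intro s t hst i
  fin_cases i <;>
    simp only [exampleF, Fin.zero_eta, Fin.mk_one, Fin.reduceFinMk, Matrix.cons_val] <;> gcongr

lemma eq_exampleF_of_isGreatestMS {t : ℝ} {F : Fin 3 → ℝ} (ht : 0 ≤ t)
    (hF : IsGreatestMS 3 2 h17 G17 t F) : F = exampleF t := by
  rcases le_total t 1 with h1 | h1
  · rw [eq_of_isGreatestMS_example_of_le_one ht h1 hF]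
    simp only [exampleF, Matrix.vecCons_inj]
    grind
  rcases le_total t (7 / 2) with h2 | h2
  · rw [eq_of_isGreatestMS_example_of_le_seven_halves h1 h2 hF]
    simp only [exampleF, Matrix.vecCons_inj]
    grind
  · rw [eq_of_isGreatestMS_example_of_seven_halves_le h2 hF]
    simp only [exampleF, Matrix.vecCons_inj]
    grind

/-- Example 2 of the paper: explicit formulas for `F(t)` in all
three time regimes, together with continuity and monotonicity of `F`. -/
theorem F_example_threeRoutes
    (F : ℝ → Fin 3 → ℝ)
    (hF : ∀ t : ℝ, 0 ≤ t → IsGreatestMS 3 2 h17 G17 t (F t)) :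
    (∀ t : ℝ, 0 ≤ t → t ≤ 1 →
      F t 0 = t - 2 ∧ F t 1 = -1 ∧ F t 2 = 0) ∧
    (∀ t : ℝ, 1 ≤ t → t ≤ 7 / 2 →
      F t 0 = (t - 3) / 2 ∧ F t 1 = (t - 3) / 2 ∧ F t 2 = (t - 1) / 10) ∧
    (∀ t : ℝ, 7 / 2 ≤ t →
      F t 0 = t / 6 - 1 / 3 ∧ F t 1 = 5 * t / 6 - 8 / 3 ∧ F t 2 = t / 6 - 1 / 3) ∧
    ContinuousOn F (Set.Ici 0) ∧
    (∀ s t : ℝ, 0 ≤ s → s ≤ t → ∀ i, F s i ≤ F t i) := by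
  have hclosed : ∀ t, 0 ≤ t → F t = exampleF t := fun t ht =>
    eq_exampleF_of_isGreatestMS ht (hF t ht)
  refine ⟨fun t h0 h1 => ?_, fun t h1 h2 => ?_, fun t h => ?_, ?_, ?_⟩
  · simp [eq_of_isGreatestMS_example_of_le_one h0 h1 (hF t h0)]
  · simp [eq_of_isGreatestMS_example_of_le_seven_halves h1 h2 (hF t (by linarith))]
  · simp [eq_of_isGreatestMS_example_of_seven_halves_le h (hF t (by linarith))]
  · exact continuous_exampleF.continuousOn.congr fun t ht => hclosed t ht
  · intro s t hs hst
    rw [hclosed s hs, hclosed t (hs.trans hst)]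
    exact monotone_exampleF hst
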